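/- arXiv:1211.5822 — 3 statements merged into one kernel-verified Lean document; each statement's English description precedes it below -/
import Mathlib

section
/- Let 0 < ω < ω₁ < 1 and set q = ω/ω₁ and C = 2/(log ω₁ - log ω). Then for every natural number α ≥ 1 and every real x ≥ 0, x^(2α) · ω^x ≤ C^(2α) · (α!)^2 · ω₁^x. -/
theorem pow_mul_rpow_le (ω ω₁ : ℝ) (hω : 0 < ω) (hωω₁ : ω < ω₁) (hω₁ : ω₁ < 1)
    (α : ℕ) (hα : 1 ≤ α) (x : ℝ) (hx : 0 ≤ x) :
    x ^ (2 * α) * ω ^ x ≤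
      (2 / (Real.log ω₁ - Real.log ω)) ^ (2 * α) * ((α.factorial : ℝ)) ^ 2 * ω₁ ^ x := by
  set L := Real.log ω₁ - Real.log ω with hLdef
  have hω₁0 : 0 < ω₁ := hω.trans hωω₁
  have hL : 0 < L := sub_pos.mpr (Real.log_lt_log hω hωω₁)
  have hy : 0 ≤ L * x / 2 := by positivity
  have h1 : (L * x / 2) ^ α ≤ (α.factorial : ℝ) * Real.exp (L * x / 2) := by
    have := Real.pow_div_factorial_le_exp (L * x / 2) hy α
    have hf : (0:ℝ) < α.factorial := by exact_mod_cast α.factorial_pos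
    calc (L * x / 2) ^ α = ((L * x / 2) ^ α / α.factorial) * α.factorial := by
          field_simp
      _ ≤ Real.exp (L * x / 2) * α.factorial := by
          exact mul_le_mul_of_nonneg_right this hf.le
      _ = (α.factorial : ℝ) * Real.exp (L * x / 2) := by ring
  have key : (L * x / 2) ^ (2 * α) ≤ (α.factorial : ℝ) ^ 2 * Real.exp (L * x) := by
    have h2 : ((L * x / 2) ^ α) ^ 2 ≤ ((α.factorial : ℝ) * Real.exp (L * x / 2)) ^ 2 := by
      apply pow_le_pow_left₀ (by positivity) h1
    calc (L * x / 2) ^ (2 * α) = ((L * x / 2) ^ α) ^ 2 := by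
          rw [← pow_mul, Nat.mul_comm]
      _ ≤ ((α.factorial : ℝ) * Real.exp (L * x / 2)) ^ 2 := h2
      _ = (α.factorial : ℝ) ^ 2 * Real.exp (L * x) := by
          rw [mul_pow, ← Real.exp_nat_mul]
          ring_nf
  have hxeq : x ^ (2 * α) = (2 / L) ^ (2 * α) * (L * x / 2) ^ (2 * α) := by
    rw [← mul_pow]
    congr 1
    field_simp
  have hexp : ω₁ ^ x = Real.exp (L * x) * ω ^ x := by
    rw [Real.rpow_def_of_pos hω, Real.rpow_def_of_pos hω₁0, ← Real.exp_add, hLdef]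
    congr 1
    ring
  have hωx : 0 < ω ^ x := Real.rpow_pos_of_pos hω x
  calc x ^ (2 * α) * ω ^ x
      = (2 / L) ^ (2 * α) * (L * x / 2) ^ (2 * α) * ω ^ x := by rw [hxeq]
    _ ≤ (2 / L) ^ (2 * α) * ((α.factorial : ℝ) ^ 2 * Real.exp (L * x)) * ω ^ x := by
        apply mul_le_mul_of_nonneg_right _ hωx.le
        exact mul_le_mul_of_nonneg_left key (by positivity)
    _ = (2 / L) ^ (2 * α) * (α.factorial : ℝ) ^ 2 * ω₁ ^ x := by
        rw [hexp]; ring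
end

section
/- Let W be a self-adjoint nonnegative compact operator whose eigenvalues form the multiset {ω_h}_{h∈ℤ^s}, where ω_h = ω^{∑_{j=1}^s a_j|h_j|^{b_j}} with ω ∈ (0,1), a_j ≥ 1, b_j ≥ 1. Let λ₁ ≥ λ₂ ≥ … be the ordered eigenvalues. Then for every η ∈ (0,1) and every n ∈ ℕ, λ_n ≤ n^{-1/η} · ∏_{j=1}^s (1 + 2ω^{η a_j}/(1-ω^{η a_j}))^{1/η}. -/
/-!
Raising to the power `η` turns `ω_h^η` into a product over the coordinates `h_j`, and since
`b_j ≥ 1` each factor is dominated by the two-sided geometric term `(ω^{η a_j})^{|h_j|}`.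
Hence the `n` largest values satisfy `n λ_n^η ≤ ∑_{k ≤ n} λ_k^η ≤ ∏_j ∑_{m ∈ ℤ} (ω^{η a_j})^{|m|}`,
and the last sum is `1 + 2 ω^{η a_j} / (1 - ω^{η a_j})`.
-/

open Finset

theorem hasSum_pow_natAbs {r : ℝ} (hr0 : 0 ≤ r) (hr1 : r < 1) :
    HasSum (fun m : ℤ => r ^ m.natAbs) (1 + 2 * r / (1 - r)) := by
  have hpos : HasSum (fun n : ℕ => r ^ (n : ℤ).natAbs) (1 - r)⁻¹ := by
    simpa only [Int.natAbs_natCast] using hasSum_geometric_of_lt_one hr0 hr1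
  have hneg : HasSum (fun n : ℕ => r ^ (-(n + 1 : ℤ)).natAbs) (r * (1 - r)⁻¹) := by
    have hfun : (fun n : ℕ => r ^ (-(n + 1 : ℤ)).natAbs) = fun n => r * r ^ n := by
      funext n
      rw [Int.natAbs_neg, ← pow_succ']
      rfl
    rw [hfun]
    exact (hasSum_geometric_of_lt_one hr0 hr1).mul_left r
  have hsum : (1 - r)⁻¹ + r * (1 - r)⁻¹ = 1 + 2 * r / (1 - r) := by
    field_simp [(sub_pos.mpr hr1).ne']
    ring
  exact hsum ▸ hpos.of_nat_of_neg_add_one hneg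

theorem rpow_mul_abs_rpow_le_pow_natAbs {ω c b : ℝ} (hω0 : 0 < ω) (hω1 : ω ≤ 1) (hc : 0 ≤ c)
    (hb : 1 ≤ b) (m : ℤ) : ω ^ (c * |(m : ℝ)| ^ b) ≤ (ω ^ c) ^ m.natAbs := by
  have habs : |(m : ℝ)| = m.natAbs := by rw [Nat.cast_natAbs, Int.cast_abs]
  have hle : (m.natAbs : ℝ) ≤ |(m : ℝ)| ^ b := by
    rcases Nat.eq_zero_or_pos m.natAbs with h0 | h1
    · rw [h0, Nat.cast_zero]; positivity
    · calc (m.natAbs : ℝ) = |(m : ℝ)| ^ (1 : ℝ) := by rw [habs, Real.rpow_one]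
        _ ≤ |(m : ℝ)| ^ b :=
          Real.rpow_le_rpow_of_exponent_le (by rw [habs]; exact_mod_cast h1) hb
  rw [← Real.rpow_natCast, ← Real.rpow_mul hω0.le]
  exact Real.rpow_le_rpow_of_exponent_ge hω0 hω1 (mul_le_mul_of_nonneg_left hle hc)

theorem rpow_sum_mul_abs_rpow_le_prod {ι : Type*} [Fintype ι] {ω η : ℝ} (hω0 : 0 < ω)
    (hω1 : ω ≤ 1) (hη : 0 ≤ η) {a b : ι → ℝ} (ha : ∀ i, 0 ≤ a i) (hb : ∀ i, 1 ≤ b i)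
    (h : ι → ℤ) :
    (ω ^ (∑ i, a i * |(h i : ℝ)| ^ b i)) ^ η ≤ ∏ i, (ω ^ (η * a i)) ^ (h i).natAbs := by
  rw [← Real.rpow_mul hω0.le, sum_mul, Real.rpow_sum_of_pos hω0]
  refine prod_le_prod (fun i _ => by positivity) fun i _ => ?_
  rw [mul_comm, ← mul_assoc]
  exact rpow_mul_abs_rpow_le_pow_natAbs hω0 hω1 (mul_nonneg hη (ha i)) (hb i) (h i)

theorem sum_prod_le_prod_of_forall_sum_le {ι κ R : Type*} [Fintype ι] [DecidableEq ι]
    [DecidableEq κ] [CommSemiring R] [PartialOrder R] [IsOrderedRing R] {f : ι → κ → R}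
    {B : ι → R} (hf : ∀ i x, 0 ≤ f i x) (hB : ∀ i (S : Finset κ), ∑ x ∈ S, f i x ≤ B i)
    (T : Finset (ι → κ)) : ∑ h ∈ T, ∏ i, f i (h i) ≤ ∏ i, B i := by
  have hT : T ⊆ Fintype.piFinset fun i => T.image (· i) := fun h hh =>
    Fintype.mem_piFinset.mpr fun i => mem_image_of_mem (· i) hh
  calc ∑ h ∈ T, ∏ i, f i (h i)
      ≤ ∑ h ∈ Fintype.piFinset fun i => T.image (· i), ∏ i, f i (h i) :=
        sum_le_sum_of_subset_of_nonneg hT fun h _ _ => prod_nonneg fun i _ => hf i _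
    _ = ∏ i, ∑ x ∈ T.image (· i), f i x := (prod_univ_sum _ _).symm
    _ ≤ ∏ i, B i := prod_le_prod (fun i _ => sum_nonneg fun x _ => hf i x) fun i _ => hB i _

theorem Antitone.mul_le_sum_range {R : Type*} [Semiring R] [PartialOrder R]
    [IsOrderedAddMonoid R] {g : ℕ → R} (hg : Antitone g) (n : ℕ) :
    n * g (n - 1) ≤ ∑ k ∈ range n, g k := by
  simpa [nsmul_eq_mul] using card_nsmul_le_sum (range n) g (g (n - 1)) fun k hk =>
    hg (Nat.le_sub_one_of_lt (mem_range.mp hk))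

theorem le_rpow_neg_inv_mul_of_mul_rpow_le {x η N C : ℝ} (hx : 0 ≤ x) (hη : 0 < η) (hN : 0 < N)
    (h : N * x ^ η ≤ C) : x ≤ N ^ (-(1 / η)) * C ^ (1 / η) := by
  have hC : 0 ≤ C := le_trans (by positivity) h
  rw [Real.rpow_neg hN.le, ← div_eq_inv_mul, ← Real.div_rpow hC hN.le, one_div,
    Real.le_rpow_inv_iff_of_pos hx (div_nonneg hC hN.le) hη, le_div_iff₀ hN, mul_comm]
  exact h

theorem eigenvalue_decay_general (s : ℕ) (ω : ℝ) (hω0 : 0 < ω) (hω1 : ω < 1)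
    (a b : Fin s → ℝ) (ha : ∀ j, 1 ≤ a j) (hb : ∀ j, 1 ≤ b j)
    (lam : ℕ → ℝ) (hmono : Antitone lam) (e : ℕ ≃ (Fin s → ℤ))
    (hlam : ∀ k, lam k = ω ^ (∑ j, a j * (|e k j| : ℝ) ^ (b j)))
    (η : ℝ) (hη0 : 0 < η) (n : ℕ) (hn : 1 ≤ n) :
    lam (n - 1) ≤ (n : ℝ) ^ (-(1 / η)) *
      (∏ j, (1 + 2 * ω ^ (η * a j) / (1 - ω ^ (η * a j)))) ^ (1 / η) := by
  have hlam_pos : ∀ k, 0 < lam k := fun k => hlam k ▸ Real.rpow_pos_of_pos hω0 _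
  have hr0 : ∀ j, 0 ≤ ω ^ (η * a j) := fun j => by positivity
  have hr1 : ∀ j, ω ^ (η * a j) < 1 := fun j =>
    Real.rpow_lt_one hω0.le hω1 (mul_pos hη0 (by linarith [ha j]))
  have hlam_pow : ∀ k, lam k ^ η ≤ ∏ j, (ω ^ (η * a j)) ^ (e k j).natAbs := fun k =>
    hlam k ▸ rpow_sum_mul_abs_rpow_le_prod hω0 hω1.le hη0.le (fun j => by linarith [ha j]) hb _
  refine le_rpow_neg_inv_mul_of_mul_rpow_le (hlam_pos _).le hη0 (by exact_mod_cast hn) ?_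
  have hpow_anti : Antitone fun k => lam k ^ η := fun i k hik =>
    Real.rpow_le_rpow (hlam_pos k).le (hmono hik) hη0.le
  classical
  calc (n : ℝ) * lam (n - 1) ^ η ≤ ∑ k ∈ range n, lam k ^ η := hpow_anti.mul_le_sum_range n
    _ ≤ ∑ k ∈ range n, ∏ j, (ω ^ (η * a j)) ^ (e k j).natAbs := sum_le_sum fun k _ => hlam_pow k
    _ = ∑ h ∈ (range n).image e, ∏ j, (ω ^ (η * a j)) ^ (h j).natAbs := by
      rw [sum_image fun _ _ _ _ hxy => e.injective hxy]
    _ ≤ _ := sum_prod_le_prod_of_forall_sum_le (fun j m => pow_nonneg (hr0 j) _)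
      (fun j S => sum_le_hasSum S (fun m _ => pow_nonneg (hr0 j) _)
        (hasSum_pow_natAbs (hr0 j) (hr1 j))) _

theorem eigenvalue_decay (s : ℕ) (ω : ℝ) (hω0 : 0 < ω) (hω1 : ω < 1)
    (a b : Fin s → ℝ) (ha : ∀ j, 1 ≤ a j) (hb : ∀ j, 1 ≤ b j)
    (lam : ℕ → ℝ) (hmono : Antitone lam) (e : ℕ ≃ (Fin s → ℤ))
    (hlam : ∀ k, lam k = ω ^ (∑ j, a j * (|e k j| : ℝ) ^ (b j)))
    (η : ℝ) (hη0 : 0 < η) (hη1 : η < 1) (n : ℕ) (hn : 1 ≤ n) :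
    lam (n - 1) ≤ (n : ℝ) ^ (-(1 / η)) *
      (∏ j, (1 + 2 * ω ^ (η * a j) / (1 - ω ^ (η * a j)))) ^ (1 / η) :=
  eigenvalue_decay_general s ω hω0 hω1 a b ha hb lam hmono e hlam η hη0 n hn
end

section
/- Let δ > 0 and suppose a_j ≥ exp(δ j) for all j ≥ j*. Let b₁, b₂, … ≥ 1 with B = ∑_{j=1}^∞ 1/b_j < ∞. Then for every real x > a₁ and every s ∈ ℕ, ∏_{j=1}^{min(s, j(x))} (1 + 2(x/a_j)^{1/b_j}) ≤ 3^{j*} · x^{B + (log 3)/δ}, where j(x) = sup{j : x > a_j}. -/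
/-!
Each factor is at most `3 * x ^ (1 / b j)` because `a j ≥ 1`, so the product is at most
`3 ^ N * x ^ B` with `N = min s j(x)`. Since `a (j(x)) < x`, either `j(x) ≤ j*` or
`exp (δ * j(x)) < x`, and in the latter case `3 ^ j(x) ≤ x ^ (log 3 / δ)`.
-/

open Real Finset

lemma one_add_two_mul_rpow_div_le {x a e : ℝ} (hx : 1 ≤ x) (ha : 1 ≤ a) (he : 0 ≤ e) :
    1 + 2 * (x / a) ^ e ≤ 3 * x ^ e := by
  have hxa : (x / a) ^ e ≤ x ^ e :=
    rpow_le_rpow (by positivity) (div_le_self (by linarith) ha) he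
  have hone : 1 ≤ x ^ e := one_le_rpow hx he
  linarith

lemma prod_one_add_two_mul_rpow_div_le {ι : Type*} (s : Finset ι) {x : ℝ} {a e : ι → ℝ}
    (hx : 1 ≤ x) (ha : ∀ i, 1 ≤ a i) (he : ∀ i, 0 ≤ e i) :
    ∏ i ∈ s, (1 + 2 * (x / a i) ^ e i) ≤ 3 ^ #s * x ^ (∑ i ∈ s, e i) := by
  have hx0 : 0 < x := by linarith
  calc ∏ i ∈ s, (1 + 2 * (x / a i) ^ e i)
      ≤ ∏ i ∈ s, 3 * x ^ e i :=
        prod_le_prod (fun i _ => by have := ha i; positivity)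
          fun i _ => one_add_two_mul_rpow_div_le hx (ha i) (he i)
    _ = 3 ^ #s * x ^ (∑ i ∈ s, e i) := by
        rw [prod_mul_distrib, prod_const, rpow_sum_of_pos hx0]

lemma pow_le_rpow_log_div_of_exp_le {c δ x : ℝ} {n : ℕ} (hc : 1 ≤ c) (hδ : 0 < δ)
    (h : exp (δ * n) ≤ x) : c ^ n ≤ x ^ (log c / δ) := by
  have hx0 : 0 < x := (exp_pos _).trans_le h
  have hn : δ * n ≤ log x := (le_log_iff_exp_le hx0).2 h
  rw [← rpow_natCast, rpow_def_of_pos (by linarith), rpow_def_of_pos hx0, exp_le_exp]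
  calc log c * n = δ * n * (log c / δ) := by field_simp
    _ ≤ log x * (log c / δ) := by gcongr; exact div_nonneg (log_nonneg hc) hδ.le

lemma pow_le_pow_mul_rpow_log_div {c δ x : ℝ} {n m : ℕ} (hc : 1 ≤ c) (hδ : 0 < δ) (hx : 1 ≤ x)
    (h : n ≤ m ∨ exp (δ * n) ≤ x) : c ^ n ≤ c ^ m * x ^ (log c / δ) := by
  have hc0 : 1 ≤ c ^ m := one_le_pow₀ hc
  have hx0 : 1 ≤ x ^ (log c / δ) := one_le_rpow hx (div_nonneg (log_nonneg hc) hδ.le)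
  rcases h with h | h
  · calc c ^ n ≤ c ^ m := pow_le_pow_right₀ hc h
      _ ≤ c ^ m * x ^ (log c / δ) := le_mul_of_one_le_right (by positivity) hx0
  · calc c ^ n ≤ x ^ (log c / δ) := pow_le_rpow_log_div_of_exp_le hc hδ h
      _ ≤ c ^ m * x ^ (log c / δ) := le_mul_of_one_le_left (by positivity) hc0

section

variable {a : ℕ → ℝ} {δ x : ℝ} {jstar : ℕ}

lemma le_or_exp_le_of_lt (hae : ∀ j, jstar ≤ j → exp (δ * j) ≤ a j) {j : ℕ} (hj : a j < x) :
    j ≤ jstar ∨ exp (δ * j) ≤ x := by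
  rcases le_total j jstar with h | h
  · exact .inl h
  · exact .inr ((hae j h).trans hj.le)

lemma bddAbove_setOf_lt (hδ : 0 < δ) (hae : ∀ j, jstar ≤ j → exp (δ * j) ≤ a j) :
    BddAbove {j : ℕ | a j < x} := by
  refine ⟨max jstar ⌈log x / δ⌉₊, fun j hj => ?_⟩
  rcases le_or_exp_le_of_lt hae hj with h | h
  · exact le_max_of_le_left h
  · have hlog : δ * j ≤ log x := (le_log_iff_exp_le ((exp_pos _).trans_le h)).2 h
    have : (j : ℝ) ≤ log x / δ := by rw [le_div_iff₀ hδ]; linarith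
    exact le_max_of_le_right (Nat.cast_le.1 (this.trans (Nat.le_ceil _)))

end

theorem product_upper_bound (a b : ℕ → ℝ) (δ : ℝ) (hδ : 0 < δ) (jstar : ℕ)
    (ha1 : ∀ j, 1 ≤ a j) (hae : ∀ j, jstar ≤ j → Real.exp (δ * j) ≤ a j)
    (hb : ∀ j, 1 ≤ b j) (hBsum : Summable fun j => 1 / b j) (B : ℝ)
    (hB : B = ∑' j : ℕ, 1 / b j)
    (x : ℝ) (hx : a 1 < x) (s : ℕ) :
    ∏ j ∈ Finset.Icc 1 (min s (sSup {j : ℕ | a j < x})),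
        (1 + 2 * (x / a j) ^ (1 / b j)) ≤
      3 ^ jstar * x ^ (B + Real.log 3 / δ) := by
  set J := sSup {j : ℕ | a j < x}
  have hx1 : 1 ≤ x := (ha1 1).trans hx.le
  have he : ∀ j, 0 ≤ 1 / b j := fun j => one_div_nonneg.2 (zero_le_one.trans (hb j))
  -- `sSup` of an unbounded set of naturals is `0`; boundedness makes `J` an actual member.
  have hJ : a J < x := Nat.sSup_mem ⟨1, hx⟩ (bddAbove_setOf_lt hδ hae)
  have hsum : ∑ j ∈ Icc 1 (min s J), 1 / b j ≤ B :=
    hB ▸ hBsum.sum_le_tsum _ fun j _ => he j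
  have hcard : (3 : ℝ) ^ #(Icc 1 (min s J)) ≤ 3 ^ J :=
    pow_le_pow_right₀ (by norm_num) (by simp)
  calc _ ≤ 3 ^ #(Icc 1 (min s J)) * x ^ (∑ j ∈ Icc 1 (min s J), 1 / b j) :=
        prod_one_add_two_mul_rpow_div_le _ hx1 ha1 he
    _ ≤ 3 ^ jstar * x ^ (log 3 / δ) * x ^ B := by
        gcongr
        exact hcard.trans <| pow_le_pow_mul_rpow_log_div (by norm_num) hδ hx1
          (le_or_exp_le_of_lt hae hJ)
    _ = 3 ^ jstar * x ^ (B + log 3 / δ) := by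
        rw [rpow_add (by linarith), mul_assoc, mul_comm (x ^ (log 3 / δ))]
end
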